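/- Consider the mixture model with mixing weight p ∈ (0,1). Suppose the support 𝒳₊ of 𝒫₊ decomposes into connected components 𝒳_{+,1},…,𝒳_{+,c} and set q := min_{i ∈ [c]} 𝒫₊(𝒳_{+,i}) > 0. Let 0 < δ < 1 and let (Y₁,Z₁),…,(Y_m,Z_m) be i.i.d. labeled samples from the mixture. If m ≥ max{ 2·log(2c/δ)/(p·log(1/(1−q))), 2·log(2/δ)/p² }, then with probability at least 1 − δ, for every i ∈ [c] there exists some index j with Y_j = + and Z_j ∈ 𝒳_{+,i}. -/

import Mathlib

/-!
All `m` samples miss the component `A i` with probability `(1 - p 𝒫₊(A i))^m ≤ exp (-p q m)`, so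
by a union bound every component is hit except with probability at most `c · exp (-p q m)`. This is
at most `δ`: for `q ≤ 1/2` by the first term of the sample size bound, since `log (1/(1-q)) ≤ 2q`
there; for `q > 1/2` by the second, since disjoint components of mass `> 1/2` force `c = 1`.
-/

open MeasureTheory Metric

/-- The mixture measure on labeled examples `(y, z) ∈ Bool × ℝ^D`:
with probability `p` draw a positive example (`y = true`) from `Pp`, and with
probability `1 - p` a negative example (`y = false`) from `Pm`. -/
noncomputable def mixture (D : ℕ) (p : ℝ)
    (Pp Pm : Measure (EuclideanSpace ℝ (Fin D))) :
    Measure (Bool × EuclideanSpace ℝ (Fin D)) :=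
  ENNReal.ofReal p • (Measure.dirac true).prod Pp
    + ENNReal.ofReal (1 - p) • (Measure.dirac false).prod Pm

theorem Real.log_one_div_one_sub_le_two_mul {q : ℝ} (hq0 : 0 ≤ q) (hq : q ≤ 1 / 2) :
    Real.log (1 / (1 - q)) ≤ 2 * q := by
  have h1q : 0 < 1 - q := by linarith
  calc Real.log (1 / (1 - q)) ≤ 1 / (1 - q) - 1 := Real.log_le_sub_one_of_pos (by positivity)
    _ = q / (1 - q) := by field_simp; ring
    _ ≤ 2 * q := by rw [div_le_iff₀ h1q]; nlinarith

theorem natCast_mul_exp_neg_le_of_sampleSize {p q δ : ℝ} {c m : ℕ} (hp0 : 0 < p) (hp1 : p ≤ 1)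
    (hq0 : 0 < q) (hcq : c * q ≤ 1) (hδ : 0 < δ)
    (hm₁ : 2 * Real.log (2 * c / δ) / (p * Real.log (1 / (1 - q))) ≤ m)
    (hm₂ : 2 * Real.log (2 / δ) / p ^ 2 ≤ m) :
    c * Real.exp (-(p * q * m)) ≤ δ := by
  rcases Nat.eq_zero_or_pos c with rfl | hc
  · simpa using hδ.le
  suffices key : Real.log (c / δ) ≤ p * q * m by
    calc c * Real.exp (-(p * q * m)) ≤ c * Real.exp (-Real.log (c / δ)) := by gcongr
      _ = δ := by rw [Real.exp_neg, Real.exp_log (by positivity)]; field_simp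
  have hm0 : (0 : ℝ) ≤ m := m.cast_nonneg
  by_cases hq : q ≤ 1 / 2
  · have hL : 0 < Real.log (1 / (1 - q)) :=
      Real.log_pos (by rw [lt_div_iff₀ (by linarith)]; linarith)
    have hL_le := Real.log_one_div_one_sub_le_two_mul hq0.le hq
    rw [div_le_iff₀ (by positivity)] at hm₁
    have hlog : Real.log (c / δ) ≤ Real.log (2 * c / δ) :=
      Real.log_le_log (by positivity) (by gcongr; linarith)
    nlinarith [mul_le_mul_of_nonneg_left hL_le (mul_nonneg hm0 hp0.le)]
  · have hc1 : c = 1 := by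
      have hc2 : (c : ℝ) < 2 := by nlinarith
      norm_cast at hc2; omega
    subst hc1
    rw [div_le_iff₀ (by positivity)] at hm₂
    have hlog : Real.log (1 / δ) ≤ Real.log (2 / δ) :=
      Real.log_le_log (by positivity) (by gcongr; norm_num)
    push_cast
    nlinarith [mul_le_mul_of_nonneg_left (show p ≤ 2 * q by linarith) (mul_nonneg hm0 hp0.le)]

theorem IsClosed.of_maximal_isPreconnected {X : Type*} [TopologicalSpace X] {S A : Set X}
    (hS : IsClosed S) (hAS : A ⊆ S) (hA : IsPreconnected A) (hmax : ∀ T, T ⊆ S → IsPreconnected T → A ⊆ T → T ⊆ A) :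
    IsClosed A :=
  isClosed_of_closure_subset <|
    hmax _ (closure_minimal hAS hS) hA.closure subset_closure

section Measure

variable {α : Type*} [MeasurableSpace α]

theorem natCast_card_mul_le_one_of_pairwise_disjoint {ι : Type*} [Fintype ι] (μ : Measure α)
    [IsProbabilityMeasure μ] {A : ι → Set α} (hmeas : ∀ i, MeasurableSet (A i))
    (hdisj : Pairwise (Function.onFun Disjoint A)) {q : ℝ} (hq : ∀ i, q ≤ (μ (A i)).toReal) :
    Fintype.card ι * q ≤ 1 := by
  have hsum : ∑ i, μ (A i) ≤ 1 := by
    rw [← tsum_fintype (L := SummationFilter.unconditional ι), ← measure_iUnion hdisj hmeas]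
    exact prob_le_one
  replace hsum := ENNReal.toReal_mono ENNReal.one_ne_top hsum
  rw [ENNReal.toReal_sum fun i _ => measure_ne_top μ (A i), ENNReal.toReal_one] at hsum
  calc Fintype.card ι * q = ∑ _i : ι, q := by simp
    _ ≤ 1 := (Finset.sum_le_sum fun i _ => hq i).trans hsum

theorem measure_pi_forall_notMem {ι : Type*} [Fintype ι] (ν : Measure α) [SigmaFinite ν]
    (S : Set α) :
    Measure.pi (fun _ : ι => ν) {ω | ∀ j, ω j ∉ S} = ν Sᶜ ^ Fintype.card ι := by
  have hset : {ω : ι → α | ∀ j, ω j ∉ S} = Set.univ.pi fun _ => Sᶜ := by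
    ext ω; simp
  rw [hset, Measure.pi_pi, Finset.prod_const, Finset.card_univ]

theorem ofReal_one_sub_le_measure (μ : Measure α) [IsProbabilityMeasure μ] {s : Set α} {δ : ℝ}
    (hδ : 0 ≤ δ) (hs : μ sᶜ ≤ ENNReal.ofReal δ) :
    ENNReal.ofReal (1 - δ) ≤ μ s := by
  rw [ENNReal.ofReal_sub 1 hδ, ENNReal.ofReal_one, tsub_le_iff_right]
  calc 1 = μ Set.univ := measure_univ.symm
    _ ≤ μ s + μ sᶜ := measure_univ_le_add_compl s
    _ ≤ μ s + ENNReal.ofReal δ := by gcongr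

theorem measure_pi_forall_notMem_le_exp {ι : Type*} [Fintype ι] (ν : Measure α)
    [IsProbabilityMeasure ν] {S : Set α} (hS : MeasurableSet S) {r : ℝ}
    (hr0 : 0 ≤ r) (hr : ENNReal.ofReal r ≤ ν S) :
    Measure.pi (fun _ : ι => ν) {ω | ∀ j, ω j ∉ S} ≤
      ENNReal.ofReal (Real.exp (-(r * Fintype.card ι))) := by
  rw [measure_pi_forall_notMem, prob_compl_eq_one_sub hS]
  calc (1 - ν S) ^ Fintype.card ι ≤ (1 - ENNReal.ofReal r) ^ Fintype.card ι := by gcongr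
    _ = ENNReal.ofReal (1 - r) ^ Fintype.card ι := by
        rw [ENNReal.ofReal_sub 1 hr0, ENNReal.ofReal_one]
    _ ≤ ENNReal.ofReal (Real.exp (-r)) ^ Fintype.card ι := by
        gcongr
        linarith [Real.add_one_le_exp (-r)]
    _ = ENNReal.ofReal (Real.exp (-(r * Fintype.card ι))) := by
        rw [← ENNReal.ofReal_pow (Real.exp_pos _).le, ← Real.exp_nat_mul]
        ring_nf

end Measure

section Mixture

variable {D : ℕ} {p : ℝ} {Pp Pm : Measure (EuclideanSpace ℝ (Fin D))}

theorem mixture_singleton_true_prod [SFinite Pp] [SFinite Pm] (s : Set (EuclideanSpace ℝ (Fin D))) :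
    mixture D p Pp Pm ({true} ×ˢ s) = ENNReal.ofReal p * Pp s := by
  simp [mixture, Measure.prod_prod]

theorem isProbabilityMeasure_mixture [IsProbabilityMeasure Pp] [IsProbabilityMeasure Pm]
    (hp0 : 0 ≤ p) (hp1 : p ≤ 1) :
    IsProbabilityMeasure (mixture D p Pp Pm) := by
  constructor
  rw [← Set.univ_prod_univ]
  simp only [mixture, Measure.add_apply, Measure.smul_apply, Measure.prod_prod, measure_univ,
    mul_one, smul_eq_mul]
  rw [← ENNReal.ofReal_add hp0 (by linarith), add_sub_cancel, ENNReal.ofReal_one]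

theorem measure_pi_mixture_forall_notMem_prod_le [IsProbabilityMeasure Pp]
    [IsProbabilityMeasure Pm] {m : ℕ} (hp0 : 0 ≤ p) (hp1 : p ≤ 1)
    {s : Set (EuclideanSpace ℝ (Fin D))} (hs : MeasurableSet s) {q : ℝ} (hq0 : 0 ≤ q)
    (hq : q ≤ (Pp s).toReal) :
    Measure.pi (fun _ : Fin m => mixture D p Pp Pm) {ω | ∀ j, ω j ∉ {true} ×ˢ s} ≤
      ENNReal.ofReal (Real.exp (-(p * q * m))) := by
  have := isProbabilityMeasure_mixture (D := D) (Pp := Pp) (Pm := Pm) hp0 hp1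
  have hhit : ENNReal.ofReal (p * q) ≤ mixture D p Pp Pm ({true} ×ˢ s) := by
    rw [mixture_singleton_true_prod, ENNReal.ofReal_mul hp0]
    gcongr
    exact ENNReal.ofReal_le_of_le_toReal hq
  have hmiss := measure_pi_forall_notMem_le_exp (ι := Fin m) _
    ((measurableSet_singleton true).prod hs) (by positivity) hhit
  rwa [Fintype.card_fin] at hmiss

end Mixture

theorem explore_hits_every_component_general
    (D : ℕ) (p : ℝ) (hp0 : 0 < p) (hp1 : p < 1)
    (Pp Pm : Measure (EuclideanSpace ℝ (Fin D)))
    (hPp : IsProbabilityMeasure Pp) (hPm : IsProbabilityMeasure Pm)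
    (Xp : Set (EuclideanSpace ℝ (Fin D)))
    (hXp_compact : IsCompact Xp)
    (c : ℕ) (A : Fin c → Set (EuclideanSpace ℝ (Fin D)))
    (hA_union : (⋃ i, A i) = Xp)
    (hA_conn : ∀ i, IsConnected (A i))
    (hA_disj : Pairwise (Function.onFun Disjoint A))
    (hA_max : ∀ i, ∀ T : Set (EuclideanSpace ℝ (Fin D)),
      T ⊆ Xp → IsPreconnected T → A i ⊆ T → T ⊆ A i)
    (q : ℝ) (hq_def : q = ⨅ i : Fin c, (Pp (A i)).toReal) (hq0 : 0 < q)
    (δ : ℝ) (hδ0 : 0 < δ)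
    (m : ℕ)
    (hm : max (2 * Real.log (2 * c / δ) / (p * Real.log (1 / (1 - q))))
            (2 * Real.log (2 / δ) / p ^ 2) ≤ (m : ℝ)) :
    ENNReal.ofReal (1 - δ) ≤
      (Measure.pi fun _ : Fin m => mixture D p Pp Pm)
        {ω : Fin m → Bool × EuclideanSpace ℝ (Fin D) |
          ∀ i : Fin c, ∃ j : Fin m, (ω j).1 = true ∧ (ω j).2 ∈ A i} := by
  have := isProbabilityMeasure_mixture (D := D) (Pp := Pp) (Pm := Pm) hp0.le hp1.le
  have hA_meas : ∀ i, MeasurableSet (A i) := fun i =>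
    (hXp_compact.isClosed.of_maximal_isPreconnected (hA_union ▸ Set.subset_iUnion A i)
      (hA_conn i).isPreconnected (hA_max i)).measurableSet
  have hq_le : ∀ i, q ≤ (Pp (A i)).toReal := fun i =>
    hq_def ▸ ciInf_le (Set.finite_range _).bddBelow i
  have hcq : c * q ≤ 1 := by
    simpa using natCast_card_mul_le_one_of_pairwise_disjoint Pp hA_meas hA_disj hq_le
  have hmiss i := measure_pi_mixture_forall_notMem_prod_le (m := m) (Pm := Pm) hp0.le hp1.le
    (hA_meas i) hq0.le (hq_le i)
  apply ofReal_one_sub_le_measure _ hδ0.le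
  calc _ ≤ Measure.pi (fun _ : Fin m => mixture D p Pp Pm)
        (⋃ i, {ω | ∀ j, ω j ∉ {true} ×ˢ A i}) := by
        refine measure_mono fun ω hω => ?_
        simpa [not_forall] using hω
    _ ≤ ∑ i : Fin c, ENNReal.ofReal (Real.exp (-(p * q * m))) :=
        (measure_iUnion_fintype_le _ _).trans (Finset.sum_le_sum fun i _ => hmiss i)
    _ ≤ ENNReal.ofReal δ := by
        rw [Finset.sum_const, Finset.card_univ, Fintype.card_fin, nsmul_eq_mul,
          ← ENNReal.ofReal_natCast, ← ENNReal.ofReal_mul (by positivity)]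
        exact ENNReal.ofReal_le_ofReal <| natCast_mul_exp_neg_le_of_sampleSize hp0 hp1.le hq0
          hcq hδ0 (le_of_max_le_left hm) (le_of_max_le_right hm)

/-- If the support `𝒳₊` of `𝒫₊` decomposes into connected components
`𝒳₊,₁, …, 𝒳₊,c` and `q := min_i 𝒫₊(𝒳₊,ᵢ) > 0`, then for
`m ≥ max{2 log(2c/δ)/(p log(1/(1-q))), 2 log(2/δ)/p²}`, with probability at least
`1 - δ` over the i.i.d. labeled sample of size `m` from the mixture, every connected
component contains a positively-labeled sample point. -/
theorem explore_hits_every_component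
    (D : ℕ) (hD : 1 ≤ D) (p : ℝ) (hp0 : 0 < p) (hp1 : p < 1)
    (Pp Pm : Measure (EuclideanSpace ℝ (Fin D)))
    (hPp : IsProbabilityMeasure Pp) (hPm : IsProbabilityMeasure Pm)
    (Xp : Set (EuclideanSpace ℝ (Fin D)))
    (hXp_compact : IsCompact Xp) (hXp_full : Pp Xp = 1)
    (c : ℕ) (hc : 0 < c) (A : Fin c → Set (EuclideanSpace ℝ (Fin D)))
    (hA_union : (⋃ i, A i) = Xp)
    (hA_conn : ∀ i, IsConnected (A i))
    (hA_disj : Pairwise (Function.onFun Disjoint A))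
    (hA_max : ∀ i, ∀ T : Set (EuclideanSpace ℝ (Fin D)),
      T ⊆ Xp → IsPreconnected T → A i ⊆ T → T ⊆ A i)
    (q : ℝ) (hq_def : q = ⨅ i : Fin c, (Pp (A i)).toReal) (hq0 : 0 < q)
    (δ : ℝ) (hδ0 : 0 < δ) (hδ1 : δ < 1)
    (m : ℕ)
    (hm : max (2 * Real.log (2 * c / δ) / (p * Real.log (1 / (1 - q))))
            (2 * Real.log (2 / δ) / p ^ 2) ≤ (m : ℝ)) :
    ENNReal.ofReal (1 - δ) ≤
      (Measure.pi fun _ : Fin m => mixture D p Pp Pm)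
        {ω : Fin m → Bool × EuclideanSpace ℝ (Fin D) |
          ∀ i : Fin c, ∃ j : Fin m, (ω j).1 = true ∧ (ω j).2 ∈ A i} :=
  explore_hits_every_component_general D p hp0 hp1 Pp Pm hPp hPm Xp hXp_compact c A hA_union hA_conn
    hA_disj hA_max q hq_def hq0 δ hδ0 m hm
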